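/- Suppose string B of length n can be partitioned into at most 2k+1 contiguous intervals such that each interval either has length at most 1, or its substring in B is within edit distance 3k of the substring of A at a position shifted by at most 3k. Then ED(A,B) ≤ 40k², provided k ≥ 1. -/

import Mathlib

/-!
Cut `A` and `B` at the block boundaries of `B`. Edit distance is subadditive under
concatenation, so `ED A B` is at most the sum of the distances between corresponding blocks.
A block of length at most `1` contributes at most `2`. Any other block is within `3k` of a
window of `A` whose start is shifted by at most `3k`; two windows of `A` that far apart agree
except for at most `3k` characters at each end, so by the triangle inequality the block
contributes at most `6k + 3k = 9k`. With at most `2k + 1` blocks,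
`ED A B ≤ (2k + 1) · 9k ≤ 40k²`.
-/

open Finset

/-- Costs for the Levenshtein edit distance (as in Mathlib's former
`Mathlib/Data/List/EditDistance/Defs.lean`, removed from Mathlib since). -/
structure Levenshtein.Cost (α β δ : Type*) where
  delete : α → δ
  insert : β → δ
  substitute : α → β → δ

/-- The default cost structure: every insertion, deletion and substitution costs `1`. -/
def Levenshtein.defaultCost {α : Type*} [DecidableEq α] : Levenshtein.Cost α α ℕ where
  delete _ := 1
  insert _ := 1
  substitute a b := if a = b then 0 else 1

/-- Helper for `suffixLevenshtein` (old Mathlib definition). -/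
def Levenshtein.impl {α β δ : Type*} [AddCommMonoid δ] [LinearOrder δ] [CanonicallyOrderedAdd δ]
    (C : Levenshtein.Cost α β δ) (xs : List α) (y : β)
    (d : {r : List δ // 0 < r.length}) : {r : List δ // 0 < r.length} :=
  let ⟨ds, w⟩ := d
  xs.zip (ds.zip ds.tail) |>.foldr
    (init := ⟨[ds.getLast (List.length_pos_iff.mp w) + C.insert y], by simp⟩)
    (fun ⟨x, d₀, d₁⟩ ⟨r, w⟩ =>
      ⟨min (C.delete x + r[0]) (min (C.insert y + d₀) (C.substitute x y + d₁)) :: r, by simp⟩)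

/-- Levenshtein distances from each suffix of `xs` to `ys` (old Mathlib definition). -/
def suffixLevenshtein {α β δ : Type*} [AddCommMonoid δ] [LinearOrder δ] [CanonicallyOrderedAdd δ]
    (C : Levenshtein.Cost α β δ) (xs : List α) (ys : List β) : {r : List δ // 0 < r.length} :=
  ys.foldr
    (Levenshtein.impl C xs)
    (xs.foldr (init := ⟨[0], by simp⟩) (fun a ⟨ds, w⟩ => ⟨(C.delete a + ds[0]) :: ds, by simp⟩))

/-- The Levenshtein edit distance (old Mathlib definition). -/
def levenshtein {α β δ : Type*} [AddCommMonoid δ] [LinearOrder δ] [CanonicallyOrderedAdd δ]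
    (C : Levenshtein.Cost α β δ) (xs : List α) (ys : List β) : δ :=
  let ⟨r, w⟩ := suffixLevenshtein C xs ys
  r[0]

/-- Edit distance (Levenshtein distance with unit costs). -/
def ED {α : Type*} [DecidableEq α] (A B : List α) : ℕ :=
  levenshtein Levenshtein.defaultCost A B


section Levenshtein

variable {α β δ : Type*} [AddCommMonoid δ] [LinearOrder δ] [CanonicallyOrderedAdd δ]
  (C : Levenshtein.Cost α β δ)

theorem levenshtein_eq_of_suffixLevenshtein_eq_cons {xs : List α} {ys : List β} {d : δ}
    {ds : List δ} (h : (suffixLevenshtein C xs ys).1 = d :: ds) : levenshtein C xs ys = d := by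
  unfold levenshtein
  generalize suffixLevenshtein C xs ys = S at h ⊢
  obtain ⟨r, w⟩ := S
  subst h
  rfl

theorem Levenshtein.impl_nil_fst (y : β) (d : {r : List δ // 0 < r.length}) :
    (Levenshtein.impl C [] y d).1 = [d.1.getLast (List.length_pos_iff.mp d.2) + C.insert y] :=
  rfl

theorem Levenshtein.impl_cons_fst (x : α) (xs : List α) (y : β) (d₀ : δ) (ds : List δ)
    (w' : 0 < ds.length) (w : 0 < (d₀ :: ds).length) :
    (Levenshtein.impl C (x :: xs) y ⟨d₀ :: ds, w⟩).1 =
      min (C.delete x +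
          (Levenshtein.impl C xs y ⟨ds, w'⟩).1[0]'(Levenshtein.impl C xs y ⟨ds, w'⟩).2)
        (min (C.insert y + d₀) (C.substitute x y + ds[0])) ::
        (Levenshtein.impl C xs y ⟨ds, w'⟩).1 := by
  obtain _ | ⟨d₁, ds⟩ := ds
  · simp at w'
  · simp [Levenshtein.impl, List.getLast_cons]

theorem suffixLevenshtein_nil_left_fst (ys : List β) :
    (suffixLevenshtein C ([] : List α) ys).1 = [levenshtein C [] ys] := by
  induction ys with
  | nil => rfl
  | cons y ys ih =>
    have h : (suffixLevenshtein C ([] : List α) (y :: ys)).1 =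
        [levenshtein C [] ys + C.insert y] := by
      show (Levenshtein.impl C [] y (suffixLevenshtein C [] ys)).1 = _
      simp [Levenshtein.impl_nil_fst, ih]
    rw [h, levenshtein_eq_of_suffixLevenshtein_eq_cons C h]

theorem levenshtein_nil_cons (y : β) (ys : List β) :
    levenshtein C ([] : List α) (y :: ys) = C.insert y + levenshtein C [] ys := by
  have h : (suffixLevenshtein C ([] : List α) (y :: ys)).1 =
      [levenshtein C [] ys + C.insert y] := by
    show (Levenshtein.impl C [] y (suffixLevenshtein C [] ys)).1 = _
    simp [Levenshtein.impl_nil_fst, suffixLevenshtein_nil_left_fst]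
  rw [levenshtein_eq_of_suffixLevenshtein_eq_cons C h, add_comm]

theorem levenshtein_cons_nil (x : α) (xs : List α) :
    levenshtein C (x :: xs) [] = C.delete x + levenshtein C xs [] :=
  rfl

theorem suffixLevenshtein_cons_left (x : α) (xs : List α) (ys : List β) :
    suffixLevenshtein C (x :: xs) ys =
      ⟨levenshtein C (x :: xs) ys :: (suffixLevenshtein C xs ys).1, by simp⟩ := by
  induction ys with
  | nil => rfl
  | cons y ys ih =>
    apply Subtype.ext
    have h : (suffixLevenshtein C (x :: xs) (y :: ys)).1 =
        min (C.delete x + levenshtein C xs (y :: ys))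
          (min (C.insert y + levenshtein C (x :: xs) ys)
            (C.substitute x y + levenshtein C xs ys)) ::
        (suffixLevenshtein C xs (y :: ys)).1 := by
      show (Levenshtein.impl C (x :: xs) y (suffixLevenshtein C (x :: xs) ys)).1 = _
      rw [ih, Levenshtein.impl_cons_fst (w' := (suffixLevenshtein C xs ys).2)]
      rfl
    rw [h, levenshtein_eq_of_suffixLevenshtein_eq_cons C h]

theorem levenshtein_cons_cons (x : α) (xs : List α) (y : β) (ys : List β) :
    levenshtein C (x :: xs) (y :: ys) =
      min (C.delete x + levenshtein C xs (y :: ys))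
        (min (C.insert y + levenshtein C (x :: xs) ys)
          (C.substitute x y + levenshtein C xs ys)) := by
  have h : (suffixLevenshtein C (x :: xs) (y :: ys)).1 =
      min (C.delete x + levenshtein C xs (y :: ys))
        (min (C.insert y + levenshtein C (x :: xs) ys)
          (C.substitute x y + levenshtein C xs ys)) ::
      (suffixLevenshtein C xs (y :: ys)).1 := by
    show (Levenshtein.impl C (x :: xs) y (suffixLevenshtein C (x :: xs) ys)).1 = _
    rw [suffixLevenshtein_cons_left,
      Levenshtein.impl_cons_fst (w' := (suffixLevenshtein C xs ys).2)]
    rfl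
  exact levenshtein_eq_of_suffixLevenshtein_eq_cons C h

end Levenshtein

section EditDistance

variable {α : Type*} [DecidableEq α]

theorem ED_nil_right (A : List α) : ED A [] = A.length := by
  induction A with
  | nil => rfl
  | cons x xs ih =>
    calc ED (x :: xs) [] = 1 + ED xs [] := levenshtein_cons_nil _ x xs
      _ = (x :: xs).length := by rw [ih, List.length_cons, add_comm]

theorem ED_nil_left (B : List α) : ED [] B = B.length := by
  induction B with
  | nil => rfl
  | cons y ys ih =>
    calc ED [] (y :: ys) = 1 + ED [] ys := levenshtein_nil_cons _ y ys
      _ = (y :: ys).length := by rw [ih, List.length_cons, add_comm]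

theorem ED_cons_cons (x y : α) (xs ys : List α) :
    ED (x :: xs) (y :: ys) =
      min (ED xs (y :: ys) + 1)
        (min (ED (x :: xs) ys + 1) (ED xs ys + if x = y then 0 else 1)) := by
  simp only [ED, levenshtein_cons_cons, add_comm]
  rfl

theorem ED_comm : ∀ A B : List α, ED A B = ED B A
  | [], B => by rw [ED_nil_left, ED_nil_right]
  | x :: xs, [] => by rw [ED_nil_left, ED_nil_right]
  | x :: xs, y :: ys => by
    rw [ED_cons_cons, ED_cons_cons, ED_comm xs (y :: ys), ED_comm (x :: xs) ys, ED_comm xs ys]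
    have : (if x = y then 0 else 1) = (if y = x then 0 else 1) := by simp [eq_comm]
    omega
termination_by A B => A.length + B.length

theorem ED_self : ∀ A : List α, ED A A = 0
  | [] => rfl
  | x :: xs => by
    rw [ED_cons_cons, ED_self xs, if_pos rfl]
    omega

theorem ED_cons_left_le (x : α) (xs ys : List α) : ED (x :: xs) ys ≤ ED xs ys + 1 := by
  cases ys with
  | nil => simp [ED_nil_right]
  | cons y ys => rw [ED_cons_cons]; exact min_le_left _ _

theorem ED_cons_right_le (y : α) (xs ys : List α) : ED xs (y :: ys) ≤ ED xs ys + 1 := by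
  rw [ED_comm, ED_comm xs]
  exact ED_cons_left_le y ys xs

theorem ED_cons_cons_le (x y : α) (xs ys : List α) :
    ED (x :: xs) (y :: ys) ≤ ED xs ys + if x = y then 0 else 1 := by
  rw [ED_cons_cons]
  exact (min_le_right _ _).trans (min_le_right _ _)

theorem ED_cons_cons_cases (x y : α) (xs ys : List α) :
    ED (x :: xs) (y :: ys) = ED xs (y :: ys) + 1 ∨
      ED (x :: xs) (y :: ys) = ED (x :: xs) ys + 1 ∨
      ED (x :: xs) (y :: ys) = ED xs ys + if x = y then 0 else 1 := by
  rw [ED_cons_cons]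
  rcases min_choice (ED xs (y :: ys) + 1) (min (ED (x :: xs) ys + 1)
    (ED xs ys + if x = y then 0 else 1)) with h | h
  · exact .inl h
  · rw [h]
    exact .inr (min_choice _ _)

theorem length_le_length_add_ED : ∀ A B : List α, B.length ≤ A.length + ED A B
  | [], B => by simp [ED_nil_left]
  | x :: xs, [] => by simp
  | x :: xs, y :: ys => by
    have := length_le_length_add_ED xs (y :: ys)
    have := length_le_length_add_ED (x :: xs) ys
    have := length_le_length_add_ED xs ys
    rw [ED_cons_cons]
    simp only [List.length_cons] at *
    omega
termination_by A B => A.length + B.length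

theorem ED_append_le : ∀ A B A' B' : List α, ED (A ++ A') (B ++ B') ≤ ED A B + ED A' B'
  | [], [], A', B' => by simp
  | [], y :: ys, A', B' => by
    have := ED_cons_right_le y A' (ys ++ B')
    have := ED_append_le [] ys A' B'
    simp only [List.nil_append, List.cons_append, ED_nil_left, List.length_cons] at *
    omega
  | x :: xs, [], A', B' => by
    have := ED_cons_left_le x (xs ++ A') B'
    have := ED_append_le xs [] A' B'
    simp only [List.nil_append, List.cons_append, ED_nil_right, List.length_cons] at *
    omega
  | x :: xs, y :: ys, A', B' => by
    have := ED_append_le xs (y :: ys) A' B'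
    have := ED_append_le (x :: xs) ys A' B'
    have := ED_append_le xs ys A' B'
    simp only [List.cons_append, ED_cons_cons] at *
    omega
termination_by A B => A.length + B.length

theorem ED_le_length_add_length (A B : List α) : ED A B ≤ A.length + B.length := by
  simpa [ED_nil_left, ED_nil_right] using ED_append_le A [] [] B

theorem ED_triangle : ∀ A B C : List α, ED A C ≤ ED A B + ED B C
  | A, [], C => by
    simpa [ED_nil_left, ED_nil_right] using ED_append_le A [] [] C
  | [], y :: ys, C => by
    have := length_le_length_add_ED (y :: ys) C
    simp only [ED_nil_left]
    omega
  | x :: xs, y :: ys, [] => by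
    have := length_le_length_add_ED (y :: ys) (x :: xs)
    rw [ED_comm (y :: ys)] at this
    simp only [ED_nil_right]
    omega
  | x :: xs, y :: ys, z :: zs => by
    -- Each of the nine combinations of last steps of `A → B` and `B → C` is matched by one of
    -- the one-step bounds for `A → C` together with an induction hypothesis.
    have := ED_triangle xs (y :: ys) (z :: zs)
    have := ED_triangle (x :: xs) (y :: ys) zs
    have := ED_triangle (x :: xs) ys (z :: zs)
    have := ED_triangle (x :: xs) ys zs
    have := ED_triangle xs ys (z :: zs)
    have := ED_triangle xs ys zs
    have : (if x = z then 0 else 1) ≤ (if x = y then 0 else 1) + (if y = z then 0 else 1) := by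
      split_ifs <;> simp_all
    have := ED_cons_left_le x xs (z :: zs)
    have := ED_cons_right_le z (x :: xs) zs
    have := ED_cons_cons_le x z xs zs
    rcases ED_cons_cons_cases x y xs ys with hAB | hAB | hAB <;>
      rcases ED_cons_cons_cases y z ys zs with hBC | hBC | hBC <;> omega
termination_by A B C => A.length + B.length + C.length

end EditDistance

section Blocks

variable {α : Type*} [DecidableEq α]

theorem ED_append_overlap_le (P M Q : List α) : ED (P ++ M) (M ++ Q) ≤ P.length + Q.length := by
  have h₁ := ED_append_le P [] M (M ++ Q)
  have h₂ := ED_append_le M M [] Q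
  simp only [List.nil_append, List.append_nil, ED_nil_left, ED_nil_right, ED_self] at h₁ h₂
  omega

theorem ED_window_add_le (X : List α) (s d l : ℕ) :
    ED ((X.drop s).take l) ((X.drop (s + d)).take l) ≤ 2 * d := by
  by_cases hdl : d ≤ l
  · have h₁ : (X.drop s).take l = (X.drop s).take d ++ (X.drop (s + d)).take (l - d) := by
      rw [← Nat.add_sub_cancel' hdl, List.take_add, List.drop_drop, Nat.add_sub_cancel_left]
    have h₂ : (X.drop (s + d)).take l =
        (X.drop (s + d)).take (l - d) ++ ((X.drop (s + d)).take l).drop (l - d) := by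
      conv_lhs => rw [← List.take_append_drop (l - d) ((X.drop (s + d)).take l)]
      rw [List.take_take, min_eq_left (Nat.sub_le l d)]
    rw [h₁, h₂]
    refine (ED_append_overlap_le _ _ _).trans ?_
    simp only [List.length_take, List.length_drop]
    omega
  · refine (ED_le_length_add_length _ _).trans ?_
    simp only [List.length_take, List.length_drop]
    omega

theorem ED_window_le_of_abs_sub_le (X : List α) {s t d : ℕ} (l : ℕ)
    (h : |(s : ℤ) - t| ≤ d) :
    ED ((X.drop s).take l) ((X.drop t).take l) ≤ 2 * d := by
  rw [abs_le] at h
  rcases le_total s t with hst | hts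
  · obtain ⟨e, rfl⟩ := Nat.exists_eq_add_of_le hst
    exact (ED_window_add_le X s e l).trans (by omega)
  · obtain ⟨e, rfl⟩ := Nat.exists_eq_add_of_le hts
    rw [ED_comm]
    exact (ED_window_add_le X t e l).trans (by omega)

theorem sum_filter_lt_eq_partialSum {M : Type*} [AddCommMonoid M] {m : ℕ} (L : Fin m → M)
    (i : Fin m) : ∑ t ∈ univ.filter (· < i), L t = Fin.partialSum L i.castSucc := by
  rw [Fin.partialSum, List.sum_take_ofFn]
  rfl

theorem ED_le_sum_ED_blocks {m : ℕ} (L : Fin m → ℕ) (A B : List α)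
    (hA : A.length ≤ ∑ i, L i) (hB : B.length ≤ ∑ i, L i) :
    ED A B ≤ ∑ i, ED ((A.drop (Fin.partialSum L i.castSucc)).take (L i))
      ((B.drop (Fin.partialSum L i.castSucc)).take (L i)) := by
  induction m generalizing A B with
  | zero =>
    simp_all [ED_self]
  | succ m ih =>
    rw [Fin.sum_univ_succ] at hA hB ⊢
    have htail := ih (Fin.tail L) (A.drop (L 0)) (B.drop (L 0))
      (by simp only [List.length_drop]; exact Nat.sub_le_iff_le_add'.mpr hA)
      (by simp only [List.length_drop]; exact Nat.sub_le_iff_le_add'.mpr hB)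
    simp only [List.drop_drop] at htail
    calc ED A B = ED (A.take (L 0) ++ A.drop (L 0)) (B.take (L 0) ++ B.drop (L 0)) := by
          rw [List.take_append_drop, List.take_append_drop]
      _ ≤ ED (A.take (L 0)) (B.take (L 0)) + ED (A.drop (L 0)) (B.drop (L 0)) :=
          ED_append_le _ _ _ _
      _ ≤ _ := by
          gcongr
          · simp
          · simpa [← Fin.succ_castSucc, Fin.partialSum_succ', Fin.tail] using htail

end Blocks

/-- Soundness of GreedyMatch: if `B` (of length `n`, like `A`) can be partitioned into
`m ≤ 2k+1` contiguous intervals (given by their lengths `L`, the `i`-th interval of `B`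
starting at the sum of the earlier lengths), each of which has length at most `1`, or is
within edit distance `3k` of a window of `A` starting at a position shifted by at most
`3k`, then `ED(A,B) ≤ 40k²`. -/
theorem greedy_soundness {α : Type*} [DecidableEq α] (n k m : ℕ) (hk : 1 ≤ k)
    (A B : List α) (hA : A.length = n) (hB : B.length = n)
    (hm : m ≤ 2 * k + 1) (L : Fin m → ℕ) (hsum : (∑ i, L i) = n)
    (hint : ∀ i : Fin m, L i ≤ 1 ∨
      ∃ iA : ℕ, iA + L i ≤ n ∧
        |(iA : ℤ) - (∑ t ∈ univ.filter (· < i), L t : ℤ)| ≤ 3 * k ∧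
        ED ((A.drop iA).take (L i))
           ((B.drop (∑ t ∈ univ.filter (· < i), L t)).take (L i)) ≤ 3 * k) :
    ED A B ≤ 40 * k ^ 2 := by
  have hblock : ∀ i, ED ((A.drop (Fin.partialSum L i.castSucc)).take (L i))
      ((B.drop (Fin.partialSum L i.castSucc)).take (L i)) ≤ 9 * k := by
    intro i
    rw [← sum_filter_lt_eq_partialSum]
    rcases hint i with hshort | ⟨iA, -, hshift, hwindow⟩
    · refine (ED_le_length_add_length _ _).trans ?_
      simp only [List.length_take]
      omega
    · have hshift' :
          |((∑ t ∈ univ.filter (· < i), L t : ℕ) : ℤ) - iA| ≤ (3 * k : ℕ) := by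
        rw [abs_sub_comm]
        exact_mod_cast hshift
      calc _ ≤ _ := ED_triangle _ ((A.drop iA).take (L i)) _
        _ ≤ 2 * (3 * k) + 3 * k := add_le_add (ED_window_le_of_abs_sub_le A _ hshift') hwindow
        _ = 9 * k := by ring
  calc ED A B ≤ ∑ i, ED ((A.drop (Fin.partialSum L i.castSucc)).take (L i))
        ((B.drop (Fin.partialSum L i.castSucc)).take (L i)) :=
        ED_le_sum_ED_blocks L A B (hA.trans hsum.symm).le (hB.trans hsum.symm).le
    _ ≤ ∑ _i : Fin m, 9 * k := sum_le_sum fun i _ => hblock i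
    _ = m * (9 * k) := by simp
    _ ≤ 40 * k ^ 2 := by nlinarith
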